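/- Let M be a finitely generated ℤ_ℓ-module, T ⊆ M its torsion submodule, and σ : M → M an automorphism preserving T. Suppose that the induced automorphism of the torsion-free quotient M/T satisfies: (σ − 1) ⊗ ℚ_ℓ is bijective on (M/T) ⊗ ℚ_ℓ. Then the natural sequence 0 → T/(σ−1)T → M/(σ−1)M → (M/T)/(σ−1)(M/T) → 0 is exact; in particular the map T/(σ−1)T → M/(σ−1)M is injective. -/

import Mathlib

/-!
Taking cokernels of `σ − 1` on `0 → T → M → M/T → 0` gives a right exact sequence for any
`σ`-stable submodule `T`, and the only obstruction to injectivity on the left is an `m ∈ M`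
with `(σ − 1) m ∈ T` but `m ∉ T`, i.e. a nonzero kernel of `σ − 1` on `M/T`. Since `M/T` is
torsion-free it embeds into `(M/T) ⊗ ℚ_ℓ`, where `σ − 1` is injective by hypothesis.
-/

open scoped TensorProduct

section

variable (ℓ : ℕ) [Fact ℓ.Prime] (M : Type*) [AddCommGroup M] [Module ℤ_[ℓ] M]

/-- The endomorphism `σ − 1` of `M`. -/
noncomputable def dMap (σ : M ≃ₗ[ℤ_[ℓ]] M) : M →ₗ[ℤ_[ℓ]] M :=
  σ.toLinearMap - LinearMap.id

variable (σ : M ≃ₗ[ℤ_[ℓ]] M)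
  (hσT : ∀ x ∈ Submodule.torsion ℤ_[ℓ] M, σ x ∈ Submodule.torsion ℤ_[ℓ] M)

/-- The restriction of `σ − 1` to the torsion submodule `T`. -/
noncomputable def dTor :
    ↥(Submodule.torsion ℤ_[ℓ] M) →ₗ[ℤ_[ℓ]] ↥(Submodule.torsion ℤ_[ℓ] M) :=
  (dMap ℓ M σ).restrict (fun x hx => by
    simpa [dMap] using sub_mem (hσT x hx) hx)

/-- The endomorphism induced by `σ − 1` on the torsion-free quotient `M/T`. -/
noncomputable def dQuot :
    (M ⧸ Submodule.torsion ℤ_[ℓ] M) →ₗ[ℤ_[ℓ]] (M ⧸ Submodule.torsion ℤ_[ℓ] M) :=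
  Submodule.mapQ _ _ (dMap ℓ M σ) (fun x hx => by
    simpa [dMap] using sub_mem (hσT x hx) hx)

/-- The natural map `T/(σ−1)T → M/(σ−1)M`. -/
noncomputable def torCoinvToCoinv :
    (↥(Submodule.torsion ℤ_[ℓ] M) ⧸ LinearMap.range (dTor ℓ M σ hσT)) →ₗ[ℤ_[ℓ]]
      (M ⧸ LinearMap.range (dMap ℓ M σ)) :=
  Submodule.mapQ _ _ (Submodule.torsion ℤ_[ℓ] M).subtype
    (by rintro _ ⟨y, rfl⟩; exact ⟨(y : M), rfl⟩)

/-- The natural map `M/(σ−1)M → (M/T)/(σ−1)(M/T)`. -/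
noncomputable def coinvToQuotCoinv :
    (M ⧸ LinearMap.range (dMap ℓ M σ)) →ₗ[ℤ_[ℓ]]
      ((M ⧸ Submodule.torsion ℤ_[ℓ] M) ⧸ LinearMap.range (dQuot ℓ M σ hσT)) :=
  Submodule.mapQ _ _ (Submodule.torsion ℤ_[ℓ] M).mkQ
    (by
      rintro _ ⟨y, rfl⟩
      exact ⟨(Submodule.torsion ℤ_[ℓ] M).mkQ y, by
        simp [dQuot, Submodule.mapQ_apply, Submodule.mkQ_apply]⟩)

theorem LinearMap.injective_of_injective_baseChange {R K N P : Type*} [CommRing R] [CommRing K]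
    [Algebra R K] [IsFractionRing R K] [AddCommGroup N] [Module R N] [Module.IsTorsionFree R N]
    [AddCommGroup P] [Module R P] {f : N →ₗ[R] P} (hf : Function.Injective (f.baseChange K)) :
    Function.Injective f := by
  have hN : Function.Injective (TensorProduct.mk R K N 1) :=
    (IsLocalizedModule.injective_iff_isRegular (nonZeroDivisors R) _).mpr fun c =>
      (isRegular_iff_mem_nonZeroDivisors.mpr c.2).isSMulRegular
  have hcomm : TensorProduct.mk R K P 1 ∘ f = f.baseChange K ∘ TensorProduct.mk R K N 1 := by
    funext x; simp
  refine Function.Injective.of_comp (f := TensorProduct.mk R K P 1) ?_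
  rw [hcomm]
  exact hf.comp hN

namespace Submodule
variable {R N : Type*} [Ring R] [AddCommGroup N] [Module R N] {p : Submodule R N}
  {f : N →ₗ[R] N} (hfp : ∀ x ∈ p, f x ∈ p)

theorem comap_le_of_injective_mapQ
    (hinj : Function.Injective (p.mapQ p f hfp)) : p.comap f ≤ p := by
  intro x hx
  rw [← Quotient.mk_eq_zero] at hx ⊢
  exact hinj (by simpa using hx)

theorem range_restrict_le_comap_range :
    LinearMap.range (f.restrict hfp) ≤ (LinearMap.range f).comap p.subtype := by
  rintro _ ⟨y, rfl⟩
  exact ⟨y, rfl⟩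

theorem range_le_comap_range_mkQ :
    LinearMap.range f ≤ (LinearMap.range (p.mapQ p f hfp)).comap p.mkQ := by
  rintro _ ⟨y, rfl⟩
  exact ⟨p.mkQ y, rfl⟩

theorem injective_mapQ_subtype_of_comap_le (hp : p.comap f ≤ p) :
    Function.Injective ((LinearMap.range (f.restrict hfp)).mapQ (LinearMap.range f) p.subtype
      (range_restrict_le_comap_range hfp)) := by
  rw [← LinearMap.ker_eq_bot, ker_mapQ, eq_bot_iff, map_le_iff_le_comap]
  rintro t ⟨m, hm⟩
  have hmp : m ∈ p := hp (show f m ∈ p from hm ▸ t.2)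
  exact (Quotient.mk_eq_zero _).mpr ⟨⟨m, hmp⟩, Subtype.ext hm⟩

theorem range_mapQ_subtype_eq_ker_mapQ_mkQ :
    LinearMap.range ((LinearMap.range (f.restrict hfp)).mapQ (LinearMap.range f) p.subtype
      (range_restrict_le_comap_range hfp)) =
    LinearMap.ker ((LinearMap.range f).mapQ (LinearMap.range (p.mapQ p f hfp)) p.mkQ
      (range_le_comap_range_mkQ hfp)) := by
  rw [range_mapQ, ker_mapQ, range_mapQ, comap_map_mkQ, range_subtype, map_sup, mkQ_map_self,
    sup_bot_eq]

theorem surjective_mapQ_mkQ :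
    Function.Surjective ((LinearMap.range f).mapQ (LinearMap.range (p.mapQ p f hfp)) p.mkQ
      (range_le_comap_range_mkQ hfp)) := by
  refine .of_comp (g := (LinearMap.range f).mkQ) ?_
  rw [← LinearMap.coe_comp, mapQ_mkQ, LinearMap.coe_comp]
  exact (mkQ_surjective _).comp (mkQ_surjective _)

end Submodule

theorem stmt_12
    (hbij : Function.Bijective (LinearMap.baseChange ℚ_[ℓ] (dQuot ℓ M σ hσT))) :
    Function.Injective (torCoinvToCoinv ℓ M σ hσT) ∧
      LinearMap.range (torCoinvToCoinv ℓ M σ hσT) =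
        LinearMap.ker (coinvToQuotCoinv ℓ M σ hσT) ∧
      Function.Surjective (coinvToQuotCoinv ℓ M σ hσT) := by
  have hT : (Submodule.torsion ℤ_[ℓ] M).comap (dMap ℓ M σ) ≤ Submodule.torsion ℤ_[ℓ] M :=
    Submodule.comap_le_of_injective_mapQ _ (LinearMap.injective_of_injective_baseChange hbij.1)
  exact ⟨Submodule.injective_mapQ_subtype_of_comap_le _ hT,
    Submodule.range_mapQ_subtype_eq_ker_mapQ_mkQ _, Submodule.surjective_mapQ_mkQ _⟩

end
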